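/- If ω₁, ω₂, ω₃ ∈ [2, 4], then for all α, β ∈ [−1, 1] the 3×3 symmetric matrix M(ω, α, β) is positive semidefinite. -/

import Mathlib

/-!
Adding and subtracting `3 (x + α y + β z)²` splits the quadratic form of `M(ω, α, β)` as
`3 (x + α y + β z)² + q(ω₁; α x, y) + q(ω₂; β x, z) + q(ω₃; β y, α z)`, where
`q(ω; a, b) = ω/2 (a² + b²) + (2ω - 6) a b = ¾ (ω - 2)(a + b)² + ¼ (6 - ω)(a - b)²`
is nonnegative for `ω ∈ [2, 6]`, whatever `α` and `β` are.
-/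

open Matrix

theorem half_mul_sq_add_sq_add_mul_nonneg {ω : ℝ} (hω : ω ∈ Set.Icc (2 : ℝ) 6) (a b : ℝ) :
    0 ≤ ω / 2 * (a ^ 2 + b ^ 2) + (2 * ω - 6) * (a * b) := by
  have key : ω / 2 * (a ^ 2 + b ^ 2) + (2 * ω - 6) * (a * b)
      = 3 / 4 * (ω - 2) * (a + b) ^ 2 + 1 / 4 * (6 - ω) * (a - b) ^ 2 := by ring
  rw [key]
  have : 0 ≤ ω - 2 := sub_nonneg.2 hω.1
  have : 0 ≤ 6 - ω := sub_nonneg.2 hω.2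
  positivity

noncomputable def M (ω₁ ω₂ ω₃ α β : ℝ) : Matrix (Fin 3) (Fin 3) ℝ :=
  !![3 + 1 / 2 * ω₁ * α ^ 2 + 1 / 2 * ω₂ * β ^ 2, ω₁ * α, ω₂ * β;
    ω₁ * α, 1 / 2 * ω₁ + 3 * α ^ 2 + 1 / 2 * ω₃ * β ^ 2, ω₃ * α * β;
    ω₂ * β, ω₃ * α * β, 1 / 2 * ω₂ + 1 / 2 * ω₃ * α ^ 2 + 3 * β ^ 2]

theorem M_isHermitian (ω₁ ω₂ ω₃ α β : ℝ) : (M ω₁ ω₂ ω₃ α β).IsHermitian := by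
  ext i j
  fin_cases i <;> fin_cases j <;> simp [M]

theorem M_dotProduct_mulVec (ω₁ ω₂ ω₃ α β : ℝ) (v : Fin 3 → ℝ) :
    star v ⬝ᵥ (M ω₁ ω₂ ω₃ α β *ᵥ v) =
      3 * (v 0 + α * v 1 + β * v 2) ^ 2
        + (ω₁ / 2 * ((α * v 0) ^ 2 + v 1 ^ 2) + (2 * ω₁ - 6) * (α * v 0 * v 1))
        + (ω₂ / 2 * ((β * v 0) ^ 2 + v 2 ^ 2) + (2 * ω₂ - 6) * (β * v 0 * v 2))
        + (ω₃ / 2 * ((β * v 1) ^ 2 + (α * v 2) ^ 2) + (2 * ω₃ - 6) * (β * v 1 * (α * v 2))) := by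
  simp only [M, star_trivial, dotProduct, mulVec, Fin.sum_univ_three, of_apply, cons_val',
    cons_val_zero, cons_val_one, cons_val_two, empty_val', cons_val_fin_one, Nat.succ_eq_add_one,
    Nat.reduceAdd, tail_cons, vecHead]
  ring

theorem M_posSemidef_of_mem_Icc {ω₁ ω₂ ω₃ : ℝ} (h₁ : ω₁ ∈ Set.Icc (2 : ℝ) 6)
    (h₂ : ω₂ ∈ Set.Icc (2 : ℝ) 6) (h₃ : ω₃ ∈ Set.Icc (2 : ℝ) 6) (α β : ℝ) :
    (M ω₁ ω₂ ω₃ α β).PosSemidef := by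
  refine .of_dotProduct_mulVec_nonneg (M_isHermitian ω₁ ω₂ ω₃ α β) fun v ↦ ?_
  rw [M_dotProduct_mulVec]
  have := half_mul_sq_add_sq_add_mul_nonneg h₁ (α * v 0) (v 1)
  have := half_mul_sq_add_sq_add_mul_nonneg h₂ (β * v 0) (v 2)
  have := half_mul_sq_add_sq_add_mul_nonneg h₃ (β * v 1) (α * v 2)
  positivity

theorem M_posSemidef (ω₁ ω₂ ω₃ α β : ℝ)
    (h₁ : ω₁ ∈ Set.Icc (2 : ℝ) 4) (h₂ : ω₂ ∈ Set.Icc (2 : ℝ) 4)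
    (h₃ : ω₃ ∈ Set.Icc (2 : ℝ) 4) :
    (!![3 + 1 / 2 * ω₁ * α ^ 2 + 1 / 2 * ω₂ * β ^ 2, ω₁ * α, ω₂ * β;
        ω₁ * α, 1 / 2 * ω₁ + 3 * α ^ 2 + 1 / 2 * ω₃ * β ^ 2, ω₃ * α * β;
        ω₂ * β, ω₃ * α * β,
          1 / 2 * ω₂ + 1 / 2 * ω₃ * α ^ 2 + 3 * β ^ 2]).PosSemidef :=
  have widen : Set.Icc (2 : ℝ) 4 ⊆ Set.Icc 2 6 := Set.Icc_subset_Icc_right (by norm_num)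
  M_posSemidef_of_mem_Icc (widen h₁) (widen h₂) (widen h₃) α β
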